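/- arXiv:2310.13086 — 6 statements merged into one kernel-verified Lean document; each statement's English description precedes it below -/
import Mathlib

section
/- Let E be a nonempty set and ℰ a nonempty collection of subsets of E. The Souslin class S(ℰ) is closed under countable unions: if Aᵐ ∈ S(ℰ) for every m ∈ ℕ, then ⋃_{m∈ℕ} Aᵐ ∈ S(ℰ). -/
open Set


/-- A Souslin scheme with values in `ℰ ∪ {E}`: `A k s` is the set indexed by the
finite sequence `(s 0, …, s k)` of length `k+1`. -/
def IsSouslinScheme {E : Type*} (ℰ : Set (Set E)) (A : (k : ℕ) → (Fin (k + 1) → ℕ) → Set E) :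
    Prop :=
  ∀ k s, A k s ∈ ℰ ∨ A k s = Set.univ

/-- The set produced by the Souslin operation: `⋃_{n ∈ ℕ^ℕ} ⋂_k A_{n₁,…,n_k}`. -/
def souslinSet {E : Type*} (A : (k : ℕ) → (Fin (k + 1) → ℕ) → Set E) : Set E :=
  ⋃ f : ℕ → ℕ, ⋂ k : ℕ, A k fun i => f i

/-- The Souslin class `S(ℰ)`. -/
def SouslinClass {E : Type*} (ℰ : Set (Set E)) : Set (Set E) :=
  {S | ∃ A, IsSouslinScheme ℰ A ∧ S = souslinSet A}

/-- A Souslin scheme is monotone if it is vertically and horizontally monotone. -/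
def IsMonotoneScheme {E : Type*} (A : (k : ℕ) → (Fin (k + 1) → ℕ) → Set E) : Prop :=
  (∀ (k : ℕ) (s : Fin (k + 2) → ℕ), A (k + 1) s ⊆ A k fun i => s i.castSucc) ∧
  (∀ (k : ℕ) (s t : Fin (k + 1) → ℕ), (∀ i, s i ≤ t i) → A k s ⊆ A k t)

/-! The union of the Souslin sets of schemes `B m` is the Souslin set of the scheme that spends
the first index of each sequence on choosing `m` and feeds the remaining ones to `B m`. -/

section UnionScheme

variable {E : Type*}

theorem mem_souslinSet {A : (k : ℕ) → (Fin (k + 1) → ℕ) → Set E} {x : E} :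
    x ∈ souslinSet A ↔ ∃ f : ℕ → ℕ, ∀ k, x ∈ A k fun i => f i := by
  simp only [souslinSet, mem_iUnion, mem_iInter]

def unionScheme (B : ℕ → (k : ℕ) → (Fin (k + 1) → ℕ) → Set E) :
    (k : ℕ) → (Fin (k + 1) → ℕ) → Set E
  | 0, _ => univ
  | k + 1, s => B (s 0) k (Fin.tail s)

theorem IsSouslinScheme.unionScheme {ℰ : Set (Set E)}
    {B : ℕ → (k : ℕ) → (Fin (k + 1) → ℕ) → Set E} (hB : ∀ m, IsSouslinScheme ℰ (B m)) :
    IsSouslinScheme ℰ (unionScheme B)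
  | 0, _ => Or.inr rfl
  | k + 1, s => hB (s 0) k (Fin.tail s)

theorem souslinSet_unionScheme (B : ℕ → (k : ℕ) → (Fin (k + 1) → ℕ) → Set E) :
    souslinSet (unionScheme B) = ⋃ m, souslinSet (B m) := by
  ext x
  simp only [mem_iUnion, mem_souslinSet]
  constructor
  · rintro ⟨f, hf⟩
    exact ⟨f 0, fun n => f (n + 1), fun k => hf (k + 1)⟩
  · rintro ⟨m, g, hg⟩
    refine ⟨fun n => Nat.casesOn n m g, ?_⟩
    rintro (_ | k)
    · exact mem_univ x
    · exact hg k

end UnionScheme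

theorem souslinClass_iUnion_general {E : Type*} (ℰ : Set (Set E))
    (A : ℕ → Set E) (hA : ∀ m, A m ∈ SouslinClass ℰ) :
    (⋃ m, A m) ∈ SouslinClass ℰ := by
  choose B hB hBA using hA
  refine ⟨unionScheme B, IsSouslinScheme.unionScheme hB, ?_⟩
  simp only [hBA, souslinSet_unionScheme]

/-- The Souslin class `S(ℰ)` is closed under countable unions. -/
theorem souslinClass_iUnion {E : Type*} (ℰ : Set (Set E)) (hE : Nonempty E)
    (hℰ : ℰ.Nonempty) (A : ℕ → Set E) (hA : ∀ m, A m ∈ SouslinClass ℰ) :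
    (⋃ m, A m) ∈ SouslinClass ℰ :=
  souslinClass_iUnion_general ℰ A hA
end

section
/- Let E be a nonempty set and ℰ a nonempty collection of subsets of E. The Souslin class S(ℰ) is closed under countable intersections: if Aᵐ ∈ S(ℰ) for every m ∈ ℕ, then ⋂_{m∈ℕ} Aᵐ ∈ S(ℰ). -/
open Set


private lemma pair_mono_right (a : ℕ) {b₁ b₂ : ℕ} (h : b₁ ≤ b₂) :
    Nat.pair a b₁ ≤ Nat.pair a b₂ := by
  rcases lt_or_eq_of_le h with h | h
  · exact (Nat.pair_lt_pair_right a h).le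
  · rw [h]

/-- The Souslin class `S(ℰ)` is closed under countable intersections. -/
theorem souslinClass_iInter {E : Type*} (ℰ : Set (Set E)) (hE : Nonempty E)
    (hℰ : ℰ.Nonempty) (A : ℕ → Set E) (hA : ∀ m, A m ∈ SouslinClass ℰ) :
    (⋂ m, A m) ∈ SouslinClass ℰ := by
  choose B hB hAB using hA
  -- index bound for the composed scheme
  have hbound : ∀ (k : ℕ) (i : Fin ((Nat.unpair k).2 + 1)),
      Nat.pair (Nat.unpair k).1 i.val < k + 1 := by
    intro k i
    have h1 : Nat.pair (Nat.unpair k).1 i.val ≤ Nat.pair (Nat.unpair k).1 (Nat.unpair k).2 :=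
      pair_mono_right _ (Nat.lt_succ_iff.mp i.isLt)
    rw [Nat.pair_unpair] at h1
    omega
  set C : (k : ℕ) → (Fin (k + 1) → ℕ) → Set E := fun k s =>
    B (Nat.unpair k).1 (Nat.unpair k).2
      (fun i => s ⟨Nat.pair (Nat.unpair k).1 i.val, hbound k i⟩) with hC
  refine ⟨C, fun k s => hB _ _ _, ?_⟩
  ext x
  simp only [mem_iInter, souslinSet, mem_iUnion]
  constructor
  · -- x ∈ ⋂ A m → x ∈ souslinSet C
    intro hx
    have hx' : ∀ m, x ∈ souslinSet (B m) := fun m => (hAB m) ▸ hx m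
    simp only [souslinSet, mem_iUnion, mem_iInter] at hx'
    choose g hg using hx'
    refine ⟨fun n => g (Nat.unpair n).1 (Nat.unpair n).2, fun k => ?_⟩
    rw [hC]
    have : (fun i : Fin ((Nat.unpair k).2 + 1) =>
        (fun n : ℕ => g (Nat.unpair n).1 (Nat.unpair n).2)
          (Nat.pair (Nat.unpair k).1 i.val)) =
        fun i : Fin ((Nat.unpair k).2 + 1) => g (Nat.unpair k).1 i.val := by
      funext i
      simp [Nat.unpair_pair]
    simpa [this] using hg (Nat.unpair k).1 (Nat.unpair k).2
  · -- x ∈ souslinSet C → x ∈ ⋂ A m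
    rintro ⟨f, hf⟩ m
    rw [hAB m]
    simp only [souslinSet, mem_iUnion, mem_iInter]
    refine ⟨fun j => f (Nat.pair m j), fun j => ?_⟩
    have h := hf (Nat.pair m j)
    rw [hC] at h
    beta_reduce at h
    simp only [Fin.val_mk] at h
    rw [Nat.unpair_pair] at h
    exact h
end

section
/- Let E be a nonempty set and ℰ a nonempty collection of subsets of E that is closed under finite unions and finite intersections. If A ∈ S(ℰ) is produced by the Souslin operation from some Souslin scheme with values in ℰ, then A is also produced by the Souslin operation from a monotone Souslin scheme with values in ℰ. -/
open Set


/-! A scheme is made vertically monotone by intersecting along initial segments, and then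
horizontally monotone by taking, at `s`, the union over all `t ≤ s`; this is a finite union, so
the values stay in `ℰ ∪ {E}`. The new Souslin set clearly contains the old one. Conversely, if `x`
lies on the branch `f` of the new scheme, the sequences `t ≤ f` witnessing this form an infinite
finitely branching tree, and an infinite branch of it (König's lemma, here compactness of
`∏ i, [0, f i]`) is a branch of the old scheme through `x`. -/

section Monotonization

variable {E : Type*}

lemma isSouslinScheme_iff_mem_insert_univ {ℰ : Set (Set E)}
    {A : (k : ℕ) → (Fin (k + 1) → ℕ) → Set E} :
    IsSouslinScheme ℰ A ↔ ∀ k s, A k s ∈ insert univ ℰ := by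
  simp only [IsSouslinScheme, mem_insert_iff, or_comm]

/-- König's lemma for the subtree of `ℕ^{<ℕ}` below a fixed `f : ℕ → ℕ`. -/
theorem exists_le_forall_of_forall_exists_le (P : (k : ℕ) → (Fin (k + 1) → ℕ) → Prop)
    (hP : ∀ k s, P (k + 1) s → P k fun i => s i.castSucc) (f : ℕ → ℕ)
    (h : ∀ k, ∃ t ≤ (fun i : Fin (k + 1) => f i), P k t) :
    ∃ g ≤ f, ∀ k, P k fun i => g i := by
  set K : Set (ℕ → ℕ) := univ.pi fun i => Iic (f i)
  set C : ℕ → Set (ℕ → ℕ) := fun k => K ∩ {g | P k fun i => g i}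
  have hK : IsCompact K := isCompact_univ_pi fun i => (finite_Iic _).isCompact
  have hP_closed (k : ℕ) : IsClosed {g : ℕ → ℕ | P k fun i => g i} :=
    (isClosed_discrete {t : Fin (k + 1) → ℕ | P k t}).preimage
      (continuous_pi fun i => continuous_apply _)
  have hC_closed (k : ℕ) : IsClosed (C k) :=
    (isClosed_set_pi fun i _ => isClosed_discrete _).inter (hP_closed k)
  have hC_succ (k : ℕ) : C (k + 1) ⊆ C k := fun g hg => ⟨hg.1, hP k _ hg.2⟩
  have hC_nonempty (k : ℕ) : (C k).Nonempty := by
    obtain ⟨t, htf, ht⟩ := h k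
    let g : ℕ → ℕ := fun i => if hi : i < k + 1 then t ⟨i, hi⟩ else f i
    have hg_le (i : ℕ) : g i ≤ f i := by
      dsimp only [g]
      split_ifs with hi
      exacts [htf ⟨i, hi⟩, le_rfl]
    have hg_restrict : (fun i : Fin (k + 1) => g i) = t := funext fun i => dif_pos i.is_lt
    refine ⟨g, fun i _ => hg_le i, ?_⟩
    change P k fun i => g i
    rwa [hg_restrict]
  obtain ⟨g, hg⟩ := IsCompact.nonempty_iInter_of_sequence_nonempty_isCompact_isClosed C hC_succ
    hC_nonempty (hK.inter_right (hP_closed 0)) hC_closed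
  rw [mem_iInter] at hg
  exact ⟨g, fun i => (hg 0).1 i (mem_univ i), fun k => (hg k).2⟩

variable (A : (k : ℕ) → (Fin (k + 1) → ℕ) → Set E)

def prefixInter (k : ℕ) (s : Fin (k + 1) → ℕ) : Set E :=
  ⋂ j : Fin (k + 1), A j fun i => s (Fin.castLE j.isLt i)

def monotonization (k : ℕ) (s : Fin (k + 1) → ℕ) : Set E :=
  ⋃ t ∈ Iic s, prefixInter A k t

lemma prefixInter_subset (k : ℕ) (s : Fin (k + 1) → ℕ) : prefixInter A k s ⊆ A k s :=
  iInter_subset_of_subset (Fin.last k) subset_rfl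

lemma prefixInter_succ_subset (k : ℕ) (s : Fin (k + 2) → ℕ) :
    prefixInter A (k + 1) s ⊆ prefixInter A k fun i => s i.castSucc :=
  subset_iInter fun j => iInter_subset _ j.castSucc

lemma subset_monotonization (k : ℕ) (s : Fin (k + 1) → ℕ) :
    prefixInter A k s ⊆ monotonization A k s :=
  subset_biUnion_of_mem (u := prefixInter A k) (le_refl s)

lemma isMonotoneScheme_monotonization : IsMonotoneScheme (monotonization A) := by
  constructor
  · intro k s
    refine iUnion₂_subset fun t ht => (prefixInter_succ_subset A k t).trans ?_
    exact subset_biUnion_of_mem (u := prefixInter A k) fun i => ht i.castSucc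
  · intro k s t hst
    exact biUnion_subset_biUnion_left (Iic_subset_Iic.mpr hst)

lemma IsSouslinScheme.monotonization {ℰ : Set (Set E)} (hUnion : SupClosed ℰ)
    (hInter : InfClosed ℰ) (hA : IsSouslinScheme ℰ A) :
    IsSouslinScheme ℰ (monotonization A) := by
  rw [isSouslinScheme_iff_mem_insert_univ] at hA ⊢
  have hub : univ ∈ upperBounds ℰ := fun _ _ => subset_univ _
  intro k s
  refine (hUnion.insert_upperBounds hub).biSup_mem_of_nonempty (finite_Iic s) nonempty_Iic
    fun t _ => ?_
  exact (hInter.insert_upperBounds hub).iInf_mem (mem_insert _ _) fun j => hA _ _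

lemma souslinSet_subset_souslinSet_monotonization :
    souslinSet A ⊆ souslinSet (monotonization A) := by
  refine iUnion_mono fun f => subset_iInter fun k => ?_
  refine subset_trans ?_ (subset_monotonization A k _)
  exact subset_iInter fun j => iInter_subset _ j.1

lemma souslinSet_monotonization_subset_souslinSet :
    souslinSet (monotonization A) ⊆ souslinSet A := by
  intro x hx
  simp only [souslinSet, mem_iUnion, mem_iInter] at hx ⊢
  obtain ⟨f, hf⟩ := hx
  have hbranch (k : ℕ) : ∃ t ≤ (fun i : Fin (k + 1) => f i), x ∈ prefixInter A k t := by
    simpa only [monotonization, mem_iUnion₂, mem_Iic, exists_prop] using hf k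
  obtain ⟨g, -, hg⟩ := exists_le_forall_of_forall_exists_le (fun k t => x ∈ prefixInter A k t)
    (fun k s hs => prefixInter_succ_subset A k s hs) f hbranch
  exact ⟨g, fun k => prefixInter_subset A k _ (hg k)⟩

end Monotonization

theorem exists_monotone_souslinScheme_general {E : Type*} (ℰ : Set (Set E))
    (hUnion : ∀ a ∈ ℰ, ∀ b ∈ ℰ, a ∪ b ∈ ℰ)
    (hInter : ∀ a ∈ ℰ, ∀ b ∈ ℰ, a ∩ b ∈ ℰ)
    (A : (k : ℕ) → (Fin (k + 1) → ℕ) → Set E) (hA : IsSouslinScheme ℰ A) :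
    ∃ D : (k : ℕ) → (Fin (k + 1) → ℕ) → Set E,
      IsSouslinScheme ℰ D ∧ IsMonotoneScheme D ∧ souslinSet D = souslinSet A :=
  ⟨monotonization A, hA.monotonization A hUnion hInter, isMonotoneScheme_monotonization A,
    (souslinSet_monotonization_subset_souslinSet A).antisymm
      (souslinSet_subset_souslinSet_monotonization A)⟩

/-- if `ℰ` is closed under finite unions and intersections, every set
produced by a Souslin scheme with values in `ℰ` is produced by a monotone such scheme. -/
theorem exists_monotone_souslinScheme {E : Type*} (ℰ : Set (Set E)) (hE : Nonempty E)
    (hℰ : ℰ.Nonempty)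
    (hUnion : ∀ a ∈ ℰ, ∀ b ∈ ℰ, a ∪ b ∈ ℰ)
    (hInter : ∀ a ∈ ℰ, ∀ b ∈ ℰ, a ∩ b ∈ ℰ)
    (A : (k : ℕ) → (Fin (k + 1) → ℕ) → Set E) (hA : IsSouslinScheme ℰ A) :
    ∃ D : (k : ℕ) → (Fin (k + 1) → ℕ) → Set E,
      IsSouslinScheme ℰ D ∧ IsMonotoneScheme D ∧ souslinSet D = souslinSet A :=
  exists_monotone_souslinScheme_general ℰ hUnion hInter A hA
end

section
/- Let (Ω, F) be a measurable space with a filtration (F_t)_{t∈ℝ₊} satisfying ⋁_t F_t ⊆ F. Let D = ⋃_{k=1}^{m} ⟦ρ_k, τ_k⟧ where each ρ_k is a predictable time and each τ_k is a stopping time with τ_k < ∞. Then the debut 𝒟[D] is a predictable time, its graph ⟦𝒟[D]⟧ is contained in D, and the projection π_Ω(D) equals {𝒟[D] < ∞}, hence belongs to F. -/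
open MeasureTheory Set
open scoped NNReal ENNReal


variable {Ω : Type*}

/-- A stopping time with respect to the filtration `𝔽`. -/
def IsStopTime {F : MeasurableSpace Ω} (𝔽 : Filtration ℝ≥0 F) (τ : Ω → ℝ≥0∞) : Prop :=
  ∀ t : ℝ≥0, MeasurableSet[𝔽 t] {ω | τ ω ≤ (t : ℝ≥0∞)}

/-- A predictable time: a stopping time announced by a nondecreasing sequence of
finite stopping times. -/
def IsPredTime {F : MeasurableSpace Ω} (𝔽 : Filtration ℝ≥0 F) (ρ : Ω → ℝ≥0∞) : Prop :=
  IsStopTime 𝔽 ρ ∧ ∃ ρs : ℕ → Ω → ℝ≥0∞,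
    (∀ n, IsStopTime 𝔽 (ρs n)) ∧ (∀ n ω, ρs n ω < ⊤) ∧ (∀ n ω, ρs n ω ≤ ρ ω) ∧
    (∀ n ω, 0 < ρ ω → ρs n ω < ρ ω) ∧ (∀ ω, Monotone fun n => ρs n ω) ∧
    (∀ ω, Filter.Tendsto (fun n => ρs n ω) Filter.atTop (nhds (ρ ω)))

/-- The graph `⟦τ⟧ ⊆ Ω × ℝ₊` of `τ : Ω → [0,∞]`. -/
def graph (τ : Ω → ℝ≥0∞) : Set (Ω × ℝ≥0) := {p | τ p.1 = (p.2 : ℝ≥0∞)}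

/-- The stochastic interval `⟦τ, ∞⟦`. -/
def rayFrom (τ : Ω → ℝ≥0∞) : Set (Ω × ℝ≥0) := {p | τ p.1 ≤ (p.2 : ℝ≥0∞)}

/-- The stochastic interval `⟦ρ, τ⟧`. -/
def stInterval (ρ τ : Ω → ℝ≥0∞) : Set (Ω × ℝ≥0) :=
  {p | ρ p.1 ≤ (p.2 : ℝ≥0∞) ∧ (p.2 : ℝ≥0∞) ≤ τ p.1}

/-- The predictable σ-algebra on `Ω × ℝ₊`. -/
def predictableSigma {F : MeasurableSpace Ω} (𝔽 : Filtration ℝ≥0 F) :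
    MeasurableSpace (Ω × ℝ≥0) :=
  MeasurableSpace.generateFrom {s | ∃ ρ, IsPredTime 𝔽 ρ ∧ s = rayFrom ρ}

/-- The optional σ-algebra on `Ω × ℝ₊`. -/
def optionalSigma {F : MeasurableSpace Ω} (𝔽 : Filtration ℝ≥0 F) :
    MeasurableSpace (Ω × ℝ≥0) :=
  MeasurableSpace.generateFrom {s | ∃ τ, IsStopTime 𝔽 τ ∧ s = rayFrom τ}

/-- The debut of a set `S ⊆ Ω × ℝ₊`. -/
noncomputable def debut (S : Set (Ω × ℝ≥0)) (ω : Ω) : ℝ≥0∞ :=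
  ⨅ (t : ℝ≥0) (_ : (ω, t) ∈ S), (t : ℝ≥0∞)

/-- Projection of a subset of `Ω × ℝ₊` onto `Ω`. -/
def projOmega (S : Set (Ω × ℝ≥0)) : Set Ω := Prod.fst '' S

/-- The outer measure `ℙ*` induced by `ℙ`. -/
noncomputable def pstar {F : MeasurableSpace Ω} (P : Measure Ω) (A : Set Ω) : ℝ≥0∞ :=
  ⨅ (E : Set Ω) (_ : A ⊆ E) (_ : MeasurableSet E), P E


section Aux
variable {F : MeasurableSpace Ω} {𝔽 : Filtration ℝ≥0 F}

lemma aux_le_le {σ τ : Ω → ℝ≥0∞} (hσ : IsStopTime 𝔽 σ) (hτ : IsStopTime 𝔽 τ) (t : ℝ≥0) :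
    MeasurableSet[𝔽 t] {ω | σ ω ≤ τ ω ∧ σ ω ≤ (t : ℝ≥0∞)} := by
  have hset : {ω | σ ω ≤ τ ω ∧ σ ω ≤ (t : ℝ≥0∞)} =
      {ω | σ ω ≤ (t : ℝ≥0∞)} ∩
        ⋂ (q : ℚ) (_ : ((Real.toNNReal q : ℝ≥0∞)) ≤ (t : ℝ≥0∞)),
          ({ω | τ ω ≤ (Real.toNNReal q : ℝ≥0∞)}ᶜ ∪ {ω | σ ω ≤ (Real.toNNReal q : ℝ≥0∞)}) := by
    ext ω
    simp only [mem_inter_iff, mem_iInter, mem_setOf_eq, mem_union, mem_compl_iff]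
    constructor
    · rintro ⟨h1, h2⟩
      refine ⟨h2, fun q _ => ?_⟩
      by_cases hq : τ ω ≤ (Real.toNNReal q : ℝ≥0∞)
      · exact Or.inr (h1.trans hq)
      · exact Or.inl hq
    · rintro ⟨h2, h⟩
      refine ⟨?_, h2⟩
      by_contra hlt
      push_neg at hlt
      obtain ⟨q, _, hq1, hq2⟩ := ENNReal.lt_iff_exists_rat_btwn.mp hlt
      have hqt : ((Real.toNNReal q : ℝ≥0∞)) ≤ (t : ℝ≥0∞) := (hq2.trans_le h2).le
      rcases h q hqt with h' | h'
      · exact h' hq1.le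
      · exact absurd h' (not_le.mpr hq2)
  rw [hset]
  refine (hσ t).inter (MeasurableSet.iInter fun q => MeasurableSet.iInter fun hq => ?_)
  have hq' : (Real.toNNReal q) ≤ t := by exact_mod_cast hq
  exact ((𝔽.mono hq' _ (hτ _)).compl).union (𝔽.mono hq' _ (hσ _))

lemma aux_stop_restrict {ρ τ : Ω → ℝ≥0∞} (hρ : IsStopTime 𝔽 ρ) (hτ : IsStopTime 𝔽 τ) :
    IsStopTime 𝔽 (fun ω => if ρ ω ≤ τ ω then ρ ω else ⊤) := by
  intro t
  have : {ω | (if ρ ω ≤ τ ω then ρ ω else ⊤) ≤ (t : ℝ≥0∞)}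
      = {ω | ρ ω ≤ τ ω ∧ ρ ω ≤ (t : ℝ≥0∞)} := by
    ext ω
    by_cases h : ρ ω ≤ τ ω <;> simp [h]
  rw [this]
  exact aux_le_le hρ hτ t

lemma aux_pred_top : IsPredTime 𝔽 (fun _ : Ω => (⊤ : ℝ≥0∞)) := by
  constructor
  · intro t
    have : {ω : Ω | (⊤ : ℝ≥0∞) ≤ (t : ℝ≥0∞)} = ∅ := by
      ext ω; simp [ENNReal.coe_lt_top.ne']
    rw [this]; exact @MeasurableSet.empty _ (𝔽 t)
  · refine ⟨fun n _ => (n : ℝ≥0∞), fun n t => ?_, fun n ω => ?_, fun n ω => le_top,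
      fun n ω _ => ?_, fun ω a b hab => ?_, fun ω => ?_⟩
    · have : {ω : Ω | ((n : ℕ) : ℝ≥0∞) ≤ (t : ℝ≥0∞)} = if ((n : ℕ) : ℝ≥0∞) ≤ (t : ℝ≥0∞) then univ else ∅ := by
        split <;> rename_i h <;> ext ω <;> simp [h]
      rw [this]; split <;> simp
    · exact ENNReal.natCast_lt_top n
    · exact ENNReal.natCast_lt_top n
    · exact_mod_cast Nat.cast_le.mpr hab
    · exact ENNReal.tendsto_nat_nhds_top

lemma aux_pred_restrict {ρ τ : Ω → ℝ≥0∞} (hρ : IsPredTime 𝔽 ρ) (hτ : IsStopTime 𝔽 τ) :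
    IsPredTime 𝔽 (fun ω => if ρ ω ≤ τ ω then ρ ω else ⊤) := by
  obtain ⟨hρs, ρs, hstop, hfin, hle, hlt, hmono, htend⟩ := hρ
  refine ⟨aux_stop_restrict hρs hτ, fun n ω => if ρs n ω ≤ τ ω then ρs n ω else ρs n ω ⊔ n,
    ?_, ?_, ?_, ?_, ?_, ?_⟩
  · -- stopping times
    intro n t
    have hA := aux_le_le (hstop n) hτ t
    have hset : {ω | (if ρs n ω ≤ τ ω then ρs n ω else ρs n ω ⊔ n) ≤ (t : ℝ≥0∞)}
        = {ω | ρs n ω ≤ τ ω ∧ ρs n ω ≤ (t : ℝ≥0∞)} ∪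
          (({ω | ρs n ω ≤ (t : ℝ≥0∞)} \ {ω | ρs n ω ≤ τ ω ∧ ρs n ω ≤ (t : ℝ≥0∞)}) ∩
            {ω | ((n : ℕ) : ℝ≥0∞) ≤ (t : ℝ≥0∞)}) := by
      ext ω
      by_cases h : ρs n ω ≤ τ ω
      · simp [h]
      · simp only [h, if_false, mem_setOf_eq, sup_le_iff, mem_union, mem_inter_iff, mem_diff]
        tauto
    rw [hset]
    refine hA.union (((hstop n t).diff hA).inter ?_)
    have : {ω : Ω | ((n : ℕ) : ℝ≥0∞) ≤ (t : ℝ≥0∞)} = if ((n : ℕ) : ℝ≥0∞) ≤ (t : ℝ≥0∞) then univ else ∅ := by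
      split <;> rename_i h <;> ext ω <;> simp [h]
    rw [this]; split <;> simp
  · -- finite
    intro n ω
    dsimp only
    split
    · exact hfin n ω
    · exact max_lt (hfin n ω) (ENNReal.natCast_lt_top n)
  · -- le
    intro n ω
    dsimp only
    by_cases h : ρ ω ≤ τ ω
    · have h' : ρs n ω ≤ τ ω := (hle n ω).trans h
      simp only [h, h', if_true]
      exact hle n ω
    · simp [h]
  · -- strict lt on positive
    intro n ω h0
    dsimp only at h0 ⊢
    by_cases h : ρ ω ≤ τ ω
    · have h' : ρs n ω ≤ τ ω := (hle n ω).trans h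
      simp only [h, if_pos, h', if_true]
      exact hlt n ω (by simpa [h] using h0)
    · simp only [h, if_false]
      split
      · exact hfin n ω
      · exact max_lt (hfin n ω) (ENNReal.natCast_lt_top n)
  · -- monotone
    intro ω a b hab
    dsimp only
    by_cases hb : ρs b ω ≤ τ ω
    · have ha : ρs a ω ≤ τ ω := (hmono ω hab).trans hb
      simp only [ha, hb, if_true]
      exact hmono ω hab
    · simp only [hb, if_false]
      have h1 : ρs a ω ≤ ρs b ω ⊔ b := le_sup_of_le_left (hmono ω hab)
      split
      · exact h1
      · exact sup_le h1 (le_sup_of_le_right (by exact_mod_cast Nat.cast_le.mpr hab))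
  · -- tendsto
    intro ω
    by_cases h : ρ ω ≤ τ ω
    · have : (fun n => if ρs n ω ≤ τ ω then ρs n ω else ρs n ω ⊔ n) = fun n => ρs n ω := by
        funext n
        have h' : ρs n ω ≤ τ ω := (hle n ω).trans h
        simp [h']
      rw [this]
      simpa [h] using htend ω
    · simp only [h, if_false]
      push_neg at h
      have hev : ∀ᶠ n in Filter.atTop, ¬ ρs n ω ≤ τ ω := by
        have := (htend ω).eventually (eventually_gt_nhds h)
        filter_upwards [this] with n hn
        exact not_le.mpr hn
      refine ENNReal.tendsto_nhds_top fun M => ?_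
      have hM : ∀ᶠ n : ℕ in Filter.atTop, (M : ℝ≥0∞) < n := by
        filter_upwards [Filter.eventually_gt_atTop M] with n hn
        exact_mod_cast hn
      filter_upwards [hev, hM] with n hn hMn
      simp only [hn, if_false]
      exact lt_of_lt_of_le hMn le_sup_right

lemma aux_pred_min {ρ₁ ρ₂ : Ω → ℝ≥0∞} (h₁ : IsPredTime 𝔽 ρ₁) (h₂ : IsPredTime 𝔽 ρ₂) :
    IsPredTime 𝔽 (fun ω => ρ₁ ω ⊓ ρ₂ ω) := by
  obtain ⟨hs₁, σ₁, hstop₁, hfin₁, hle₁, hlt₁, hmono₁, htend₁⟩ := h₁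
  obtain ⟨hs₂, σ₂, hstop₂, hfin₂, hle₂, hlt₂, hmono₂, htend₂⟩ := h₂
  refine ⟨?_, fun n ω => σ₁ n ω ⊓ σ₂ n ω, fun n t => ?_, fun n ω => ?_, fun n ω => ?_,
    fun n ω h0 => ?_, fun ω a b hab => ?_, fun ω => ?_⟩
  · intro t
    have : {ω | ρ₁ ω ⊓ ρ₂ ω ≤ (t : ℝ≥0∞)} = {ω | ρ₁ ω ≤ (t : ℝ≥0∞)} ∪ {ω | ρ₂ ω ≤ (t : ℝ≥0∞)} := by
      ext ω; simp [inf_le_iff]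
    rw [this]; exact (hs₁ t).union (hs₂ t)
  · have : {ω | σ₁ n ω ⊓ σ₂ n ω ≤ (t : ℝ≥0∞)} = {ω | σ₁ n ω ≤ (t : ℝ≥0∞)} ∪ {ω | σ₂ n ω ≤ (t : ℝ≥0∞)} := by
      ext ω; simp [inf_le_iff]
    rw [this]; exact (hstop₁ n t).union (hstop₂ n t)
  · exact lt_of_le_of_lt inf_le_left (hfin₁ n ω)
  · exact inf_le_inf (hle₁ n ω) (hle₂ n ω)
  · dsimp only at h0 ⊢
    rcases le_total (ρ₁ ω) (ρ₂ ω) with h | h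
    · have : ρ₁ ω ⊓ ρ₂ ω = ρ₁ ω := inf_eq_left.mpr h
      rw [this] at h0 ⊢
      exact lt_of_le_of_lt inf_le_left (hlt₁ n ω h0)
    · have : ρ₁ ω ⊓ ρ₂ ω = ρ₂ ω := inf_eq_right.mpr h
      rw [this] at h0 ⊢
      exact lt_of_le_of_lt inf_le_right (hlt₂ n ω h0)
  · exact inf_le_inf (hmono₁ ω hab) (hmono₂ ω hab)
  · exact (htend₁ ω).min (htend₂ ω)

lemma aux_pred_iInf {m : ℕ} {f : Fin m → Ω → ℝ≥0∞} (h : ∀ k, IsPredTime 𝔽 (f k)) :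
    IsPredTime 𝔽 (fun ω => ⨅ k, f k ω) := by
  induction m with
  | zero =>
    have : (fun ω => ⨅ k : Fin 0, f k ω) = fun _ : Ω => (⊤ : ℝ≥0∞) := by
      funext ω; exact iInf_of_empty _
    rw [this]; exact aux_pred_top
  | succ m ih =>
    have hsplit : (fun ω => ⨅ k : Fin (m + 1), f k ω)
        = fun ω => f 0 ω ⊓ ⨅ k : Fin m, f k.succ ω := by
      funext ω
      apply le_antisymm
      · exact le_inf (iInf_le _ 0) (le_iInf fun k => iInf_le _ k.succ)
      · refine le_iInf fun k => ?_
        induction k using Fin.cases with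
        | zero => exact inf_le_left
        | succ j => exact inf_le_right.trans (iInf_le _ j)
    rw [hsplit]
    exact aux_pred_min (h 0) (ih fun k => h k.succ)

lemma aux_iInf_attained {m : ℕ} (f : Fin m → ℝ≥0∞) (h : (⨅ k, f k) ≠ ⊤) :
    ∃ k, f k = ⨅ j, f j := by
  cases m with
  | zero => exact absurd (iInf_of_empty f) h
  | succ m =>
    obtain ⟨i, _, hi⟩ := Finset.exists_mem_eq_inf (Finset.univ : Finset (Fin (m+1)))
      Finset.univ_nonempty f
    refine ⟨i, ?_⟩
    rw [show (⨅ j, f j) = Finset.univ.inf f by simp [Finset.inf_eq_iInf], hi]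

end Aux

/-- for a finite union `D` of stochastic intervals `⟦ρ_k, τ_k⟧` with
`ρ_k` predictable and `τ_k` a finite stopping time, the debut of `D` is a predictable
time, its graph lies in `D`, and `π_Ω(D) = {𝒟[D] < ∞} ∈ F`. -/
theorem debut_finite_union_stIntervals {Ω : Type*} {F : MeasurableSpace Ω}
    (𝔽 : Filtration ℝ≥0 F) (m : ℕ) (ρ τ : Fin m → Ω → ℝ≥0∞)
    (hρ : ∀ k, IsPredTime 𝔽 (ρ k)) (hτ : ∀ k, IsStopTime 𝔽 (τ k))
    (hτfin : ∀ k ω, τ k ω < ⊤) (D : Set (Ω × ℝ≥0))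
    (hD : D = ⋃ k, stInterval (ρ k) (τ k)) :
    IsPredTime 𝔽 (debut D) ∧ graph (debut D) ⊆ D ∧
      projOmega D = {ω | debut D ω < ⊤} ∧ MeasurableSet[F] (projOmega D) := by
  subst hD
  set D := ⋃ k, stInterval (ρ k) (τ k) with hDdef
  set η : Fin m → Ω → ℝ≥0∞ := fun k ω => if ρ k ω ≤ τ k ω then ρ k ω else ⊤ with hη
  have hmem : ∀ (ω : Ω) (k : Fin m), ρ k ω ≤ τ k ω → (ω, (ρ k ω).toNNReal) ∈ D := by
    intro ω k hk
    have hfin : ρ k ω ≠ ⊤ := (hk.trans_lt (hτfin k ω)).ne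
    have hcoe : (((ρ k ω).toNNReal : ℝ≥0) : ℝ≥0∞) = ρ k ω := ENNReal.coe_toNNReal hfin
    exact mem_iUnion.mpr ⟨k, ⟨hcoe.ge, hcoe.le.trans hk⟩⟩
  have hdebut : debut D = fun ω => ⨅ k, η k ω := by
    funext ω
    apply le_antisymm
    · refine le_iInf fun k => ?_
      by_cases hk : ρ k ω ≤ τ k ω
      · have h1 : debut D ω ≤ (((ρ k ω).toNNReal : ℝ≥0) : ℝ≥0∞) :=
          iInf₂_le ((ρ k ω).toNNReal) (hmem ω k hk)
        have hfin : ρ k ω ≠ ⊤ := (hk.trans_lt (hτfin k ω)).ne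
        have hcoe : (((ρ k ω).toNNReal : ℝ≥0) : ℝ≥0∞) = ρ k ω := ENNReal.coe_toNNReal hfin
        simp only [hη, hk, if_true]
        exact h1.trans_eq hcoe
      · simp [hη, hk]
    · refine le_iInf₂ fun t ht => ?_
      obtain ⟨k, hk1, hk2⟩ := mem_iUnion.mp ht
      have hk : ρ k ω ≤ τ k ω := hk1.trans hk2
      have : η k ω ≤ (t : ℝ≥0∞) := by simp only [hη, hk, if_true]; exact hk1
      exact (iInf_le _ k).trans this
  have hattain : ∀ ω : Ω, debut D ω < ⊤ → ∃ k, ρ k ω ≤ τ k ω ∧ ρ k ω = debut D ω := by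
    intro ω hlt
    rw [hdebut] at hlt ⊢
    dsimp only at hlt ⊢
    obtain ⟨k, hk⟩ := aux_iInf_attained (fun k => η k ω) hlt.ne
    by_cases hc : ρ k ω ≤ τ k ω
    · refine ⟨k, hc, ?_⟩
      rw [← hk]; simp only [hη, hc, if_true]
    · exfalso
      have : η k ω = ⊤ := by simp [hη, hc]
      rw [this] at hk
      exact hlt.ne hk.symm
  have hpred : IsPredTime 𝔽 (debut D) := by
    rw [hdebut]
    exact aux_pred_iInf fun k => aux_pred_restrict (hρ k) (hτ k)
  have hproj : projOmega D = {ω | debut D ω < ⊤} := by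
    ext ω
    constructor
    · rintro ⟨⟨ω', t⟩, hmem', rfl⟩
      have hle' : debut D ω' ≤ ((t : ℝ≥0) : ℝ≥0∞) := iInf₂_le t hmem'
      exact lt_of_le_of_lt hle' ENNReal.coe_lt_top
    · intro hlt
      obtain ⟨k, hk, _⟩ := hattain ω hlt
      exact ⟨(ω, (ρ k ω).toNNReal), hmem ω k hk, rfl⟩
  refine ⟨hpred, ?_, hproj, ?_⟩
  · rintro ⟨ω, t⟩ hgt
    have hgt' : debut D ω = (t : ℝ≥0∞) := hgt
    have hlt : debut D ω < ⊤ := by rw [hgt']; exact ENNReal.coe_lt_top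
    obtain ⟨k, hk, hkeq⟩ := hattain ω hlt
    refine mem_iUnion.mpr ⟨k, ⟨?_, ?_⟩⟩
    · rw [hkeq, hgt']
    · rw [← hgt', ← hkeq]; exact hk
  · rw [hproj]
    have : {ω | debut D ω < ⊤} = ⋃ n : ℕ, {ω | debut D ω ≤ ((n : ℝ≥0) : ℝ≥0∞)} := by
      ext ω
      simp only [mem_setOf_eq, mem_iUnion]
      constructor
      · intro h
        obtain ⟨n, hn⟩ := ENNReal.exists_nat_gt h.ne
        exact ⟨n, by exact_mod_cast hn.le⟩
      · rintro ⟨n, hn⟩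
        exact lt_of_le_of_lt hn ENNReal.coe_lt_top
    rw [this]
    exact MeasurableSet.iUnion fun n => 𝔽.le (n : ℝ≥0) _ (hpred.1 (n : ℝ≥0))
end

section
/- Let (Ω, F) be a measurable space with a filtration (F_t)_{t∈ℝ₊} satisfying ⋁_t F_t ⊆ F, and let (D_k)_{k∈ℕ} be a decreasing sequence of sets, each a finite union of stochastic intervals ⟦ρ, τ⟧ with ρ a predictable time and τ a stopping time with τ < ∞ (or the empty set). Then the debuts 𝒟[D_k] form a nondecreasing sequence, 𝒟[⋂_{k=1}^∞ D_k] = sup_k 𝒟[D_k] is a predictable time, the graph ⟦𝒟[⋂_k D_k]⟧ is contained in ⋂_k D_k, and π_Ω(⋂_{k=1}^∞ D_k) = ⋂_{k=1}^∞ π_Ω(D_k). -/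
open MeasureTheory Set
open scoped NNReal ENNReal


variable {Ω : Type*}

/-- The class `ℰ*` of finite unions of stochastic intervals `⟦ρ_k, τ_k⟧` with `ρ_k`
predictable times and `τ_k` finite stopping times, together with `∅`. -/
def EStar {Ω : Type*} {F : MeasurableSpace Ω} (𝔽 : Filtration ℝ≥0 F) :
    Set (Set (Ω × ℝ≥0)) :=
  {D | D = ∅ ∨ ∃ (n : ℕ) (ρ τ : Fin (n + 1) → Ω → ℝ≥0∞),
    (∀ k, IsPredTime 𝔽 (ρ k)) ∧ (∀ k, IsStopTime 𝔽 (τ k)) ∧ (∀ k ω, τ k ω < ⊤) ∧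
    D = ⋃ k, stInterval (ρ k) (τ k)}

/-!
Every set of `ℰ*` has compact `ω`-sections, namely finite unions of compact intervals
`[ρ ω, τ ω]`. So debuts of such sets are attained, and Cantor's intersection theorem, applied to
the sections of `D k ∩ {t ≤ s}` with `s = supₖ 𝒟[D k]`, puts a point of `⋂ₖ D k` at time `s`;
this gives the formula for the debut, the graph inclusion and the projection identity at once.

For predictability: the debut of `⟦ρ, τ⟧` is `ρ` restricted to `{ρ ≤ τ}`, announced by the
announcing sequence `ρₙ` of `ρ` pushed beyond `n` off `{ρₙ ≤ τ}`; finite minima of predictable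
times are predictable, and so are countable suprema, announced by `maxₖ≤ₙ ρₖ,ₙ`.
-/

open Filter Topology

section StoppingTimes

variable {F : MeasurableSpace Ω} {𝔽 : Filtration ℝ≥0 F} {ρ σ τ : Ω → ℝ≥0∞}

theorem isStopTime_const (c : ℝ≥0∞) : IsStopTime 𝔽 (fun _ : Ω => c) :=
  fun _ => MeasurableSet.const _

-- `ℝ≥0∞` is definitionally `WithTop ℝ≥0`, so `IsStopTime` is Mathlib's `IsStoppingTime`.
theorem IsStopTime.min (hσ : IsStopTime 𝔽 σ) (hτ : IsStopTime 𝔽 τ) :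
    IsStopTime 𝔽 (fun ω => min (σ ω) (τ ω)) :=
  IsStoppingTime.min hσ hτ

theorem IsStopTime.max (hσ : IsStopTime 𝔽 σ) (hτ : IsStopTime 𝔽 τ) :
    IsStopTime 𝔽 (fun ω => max (σ ω) (τ ω)) :=
  IsStoppingTime.max hσ hτ

theorem IsStopTime.iSup {ι : Sort*} [Countable ι] {τ : ι → Ω → ℝ≥0∞}
    (h : ∀ i, IsStopTime 𝔽 (τ i)) : IsStopTime 𝔽 (fun ω => ⨆ i, τ i ω) := fun t => by
  simp only [iSup_le_iff, ofPred_forall]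
  exact MeasurableSet.iInter fun i => h i t

noncomputable def restrictLE (ρ τ : Ω → ℝ≥0∞) (ω : Ω) : ℝ≥0∞ :=
  if ρ ω ≤ τ ω then ρ ω else ⊤

theorem restrictLE_of_le {ω : Ω} (h : ρ ω ≤ τ ω) : restrictLE ρ τ ω = ρ ω := if_pos h

theorem restrictLE_of_not_le {ω : Ω} (h : ¬ρ ω ≤ τ ω) : restrictLE ρ τ ω = ⊤ := if_neg h

theorem restrictLE_mono {ρ' : Ω → ℝ≥0∞} {ω : Ω} (h : ρ' ω ≤ ρ ω) :
    restrictLE ρ' τ ω ≤ restrictLE ρ τ ω := by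
  by_cases hρ : ρ ω ≤ τ ω
  · rw [restrictLE_of_le hρ, restrictLE_of_le (h.trans hρ)]
    exact h
  · rw [restrictLE_of_not_le hρ]
    exact le_top

theorem isStopTime_restrictLE (hρ : IsStopTime 𝔽 ρ) (hτ : IsStopTime 𝔽 τ) :
    IsStopTime 𝔽 (restrictLE ρ τ) := fun t => by
  have hset : {ω | restrictLE ρ τ ω ≤ t} = {ω | ρ ω ≤ τ ω} ∩ {ω | ρ ω ≤ t} := by
    ext ω
    by_cases h : ρ ω ≤ τ ω
    · simp [restrictLE_of_le h, h]
    · simp [restrictLE_of_not_le h, h]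
  rw [hset]
  exact (IsStoppingTime.measurableSet_le_stopping_time hρ hτ).2 t

end StoppingTimes

section PredictableTimes

variable {F : MeasurableSpace Ω} {𝔽 : Filtration ℝ≥0 F} {ρ σ τ : Ω → ℝ≥0∞}
  {ρs σs : ℕ → Ω → ℝ≥0∞}

structure Announces (𝔽 : Filtration ℝ≥0 F) (ρs : ℕ → Ω → ℝ≥0∞) (ρ : Ω → ℝ≥0∞) : Prop where
  isStopTime : ∀ n, IsStopTime 𝔽 (ρs n)
  lt_top : ∀ n ω, ρs n ω < ⊤
  le : ∀ n ω, ρs n ω ≤ ρ ω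
  lt_of_pos : ∀ n ω, 0 < ρ ω → ρs n ω < ρ ω
  monotone : ∀ ω, Monotone fun n => ρs n ω
  tendsto : ∀ ω, Tendsto (fun n => ρs n ω) atTop (𝓝 (ρ ω))

theorem isPredTime_iff_exists_announces :
    IsPredTime 𝔽 ρ ↔ IsStopTime 𝔽 ρ ∧ ∃ ρs, Announces 𝔽 ρs ρ :=
  ⟨fun ⟨hρ, ρs, h₁, h₂, h₃, h₄, h₅, h₆⟩ => ⟨hρ, ρs, h₁, h₂, h₃, h₄, h₅, h₆⟩,
    fun ⟨hρ, ρs, h₁, h₂, h₃, h₄, h₅, h₆⟩ => ⟨hρ, ρs, h₁, h₂, h₃, h₄, h₅, h₆⟩⟩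

theorem announces_natCast_top : Announces 𝔽 (fun n _ => n) (fun _ : Ω => ⊤) where
  isStopTime n := isStopTime_const n
  lt_top n _ := ENNReal.natCast_lt_top n
  le _ _ := le_top
  lt_of_pos n _ _ := ENNReal.natCast_lt_top n
  monotone _ _ _ h := Nat.cast_le.2 h
  tendsto _ := ENNReal.tendsto_nat_nhds_top

theorem Announces.min (hρ : Announces 𝔽 ρs ρ) (hσ : Announces 𝔽 σs σ) :
    Announces 𝔽 (fun n ω => min (ρs n ω) (σs n ω)) (fun ω => min (ρ ω) (σ ω)) where
  isStopTime n := (hρ.isStopTime n).min (hσ.isStopTime n)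
  lt_top n ω := (min_le_left _ _).trans_lt (hρ.lt_top n ω)
  le n ω := min_le_min (hρ.le n ω) (hσ.le n ω)
  lt_of_pos n ω hpos := by
    rw [lt_min_iff] at hpos
    exact min_lt_min (hρ.lt_of_pos n ω hpos.1) (hσ.lt_of_pos n ω hpos.2)
  monotone ω _ _ h := min_le_min (hρ.monotone ω h) (hσ.monotone ω h)
  tendsto ω := (hρ.tendsto ω).min (hσ.tendsto ω)

-- The approximant is `ρₙ` on `{ρₙ ≤ τ}` and `max ρₙ n` elsewhere; on `{τ < ρ}` eventually
-- `τ < ρₙ`, so it tends to `⊤` there.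
theorem announces_restrictLE (hρ : Announces 𝔽 ρs ρ) (hτ : IsStopTime 𝔽 τ) :
    Announces 𝔽 (fun n ω => min (restrictLE (ρs n) τ ω) (max (ρs n ω) n)) (restrictLE ρ τ) where
  isStopTime n :=
    (isStopTime_restrictLE (hρ.isStopTime n) hτ).min ((hρ.isStopTime n).max (isStopTime_const n))
  lt_top n ω := (min_le_right _ _).trans_lt (max_lt (hρ.lt_top n ω) (ENNReal.natCast_lt_top n))
  le n ω := (min_le_left _ _).trans (restrictLE_mono (hρ.le n ω))
  lt_of_pos n ω hpos := by
    by_cases h : ρ ω ≤ τ ω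
    · rw [restrictLE_of_le h] at hpos ⊢
      refine (min_le_left _ _).trans_lt ?_
      rw [restrictLE_of_le ((hρ.le n ω).trans h)]
      exact hρ.lt_of_pos n ω hpos
    · rw [restrictLE_of_not_le h]
      exact (min_le_right _ _).trans_lt (max_lt (hρ.lt_top n ω) (ENNReal.natCast_lt_top n))
  monotone ω _ _ h := min_le_min (restrictLE_mono (hρ.monotone ω h))
    (max_le_max (hρ.monotone ω h) (Nat.cast_le.2 h))
  tendsto ω := by
    by_cases h : ρ ω ≤ τ ω
    · rw [restrictLE_of_le h]
      refine (hρ.tendsto ω).congr fun n => ?_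
      rw [restrictLE_of_le ((hρ.le n ω).trans h), min_eq_left (le_max_left _ _)]
    · rw [restrictLE_of_not_le h]
      refine tendsto_nhds_top_mono ENNReal.tendsto_nat_nhds_top ?_
      filter_upwards [(hρ.tendsto ω).eventually (eventually_gt_nhds (not_le.1 h))] with n hn
      rw [restrictLE_of_not_le (not_le.2 hn), min_eq_right le_top]
      exact le_max_right _ _

theorem Announces.iSup {ρs : ℕ → ℕ → Ω → ℝ≥0∞} {ρ : ℕ → Ω → ℝ≥0∞}
    (h : ∀ k, Announces 𝔽 (ρs k) (ρ k)) :
    Announces 𝔽 (fun n ω => (Finset.range (n + 1)).sup fun k => ρs k n ω)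
      (fun ω => ⨆ k, ρ k ω) := by
  have hle : ∀ n ω, ((Finset.range (n + 1)).sup fun k => ρs k n ω) ≤ ⨆ k, ρ k ω :=
    fun n ω => Finset.sup_le fun k _ => ((h k).le n ω).trans (le_iSup (fun k => ρ k ω) k)
  have hmono : ∀ ω, Monotone fun n => (Finset.range (n + 1)).sup fun k => ρs k n ω := by
    refine fun ω => monotone_nat_of_le_succ fun n => Finset.sup_le fun k hk => ?_
    have hk' : k ∈ Finset.range (n + 1 + 1) :=
      Finset.mem_range.2 (Nat.lt_succ_of_lt (Finset.mem_range.1 hk))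
    exact ((h k).monotone ω n.le_succ).trans (Finset.le_sup (f := fun k => ρs k (n + 1) ω) hk')
  refine ⟨fun n t => ?_, fun n ω => ?_, hle, fun n ω hpos => ?_, hmono, fun ω => ?_⟩
  · simp only [Finset.sup_le_iff, ofPred_forall]
    exact MeasurableSet.iInter fun k => MeasurableSet.iInter fun _ => (h k).isStopTime n t
  · exact (Finset.sup_lt_iff ENNReal.zero_lt_top).2 fun k _ => (h k).lt_top n ω
  · refine (Finset.sup_lt_iff hpos).2 fun k _ => ?_
    rcases eq_zero_or_pos (ρ k ω) with h0 | h0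
    · exact ((h k).le n ω |>.trans h0.le).trans_lt hpos
    · exact ((h k).lt_of_pos n ω h0).trans_le (le_iSup (fun k => ρ k ω) k)
  · -- `ρ k` is the limit of `ρs k n ≤ (n-th approximant)` for `n ≥ k`
    have hsup : (⨆ n, (Finset.range (n + 1)).sup fun k => ρs k n ω) = ⨆ k, ρ k ω := by
      refine le_antisymm (iSup_le fun n => hle n ω) (iSup_le fun k => ?_)
      refine le_of_tendsto ((h k).tendsto ω) (eventually_atTop.2 ⟨k, fun n hn => ?_⟩)
      have hk : k ∈ Finset.range (n + 1) := Finset.mem_range.2 (Nat.lt_succ_of_le hn)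
      exact (Finset.le_sup (f := fun k => ρs k n ω) hk).trans
        (le_iSup (fun n => (Finset.range (n + 1)).sup fun k => ρs k n ω) n)
    exact hsup ▸ tendsto_atTop_iSup (hmono ω)

theorem isPredTime_top : IsPredTime 𝔽 (fun _ : Ω => ⊤) :=
  isPredTime_iff_exists_announces.2 ⟨isStopTime_const ⊤, _, announces_natCast_top⟩

theorem IsPredTime.min (hρ : IsPredTime 𝔽 ρ) (hσ : IsPredTime 𝔽 σ) :
    IsPredTime 𝔽 (fun ω => min (ρ ω) (σ ω)) := by
  obtain ⟨hρ, ρs, hρs⟩ := isPredTime_iff_exists_announces.1 hρ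
  obtain ⟨hσ, σs, hσs⟩ := isPredTime_iff_exists_announces.1 hσ
  exact isPredTime_iff_exists_announces.2 ⟨hρ.min hσ, _, hρs.min hσs⟩

theorem isPredTime_iInf {ι : Type*} [Finite ι] {ρ : ι → Ω → ℝ≥0∞}
    (h : ∀ i, IsPredTime 𝔽 (ρ i)) : IsPredTime 𝔽 (fun ω => ⨅ i, ρ i ω) := by
  classical
  cases nonempty_fintype ι
  have hfinset : ∀ s : Finset ι, IsPredTime 𝔽 (fun ω => ⨅ i ∈ s, ρ i ω) := by
    intro s
    induction s using Finset.induction_on with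
    | empty => simpa using isPredTime_top
    | insert i s _ ih => simpa only [Finset.iInf_insert] using (h i).min ih
  simpa using hfinset Finset.univ

theorem isPredTime_restrictLE (hρ : IsPredTime 𝔽 ρ) (hτ : IsStopTime 𝔽 τ) :
    IsPredTime 𝔽 (restrictLE ρ τ) := by
  obtain ⟨hρ, ρs, hρs⟩ := isPredTime_iff_exists_announces.1 hρ
  exact isPredTime_iff_exists_announces.2
    ⟨isStopTime_restrictLE hρ hτ, _, announces_restrictLE hρs hτ⟩

theorem isPredTime_iSup {ρ : ℕ → Ω → ℝ≥0∞} (h : ∀ k, IsPredTime 𝔽 (ρ k)) :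
    IsPredTime 𝔽 (fun ω => ⨆ k, ρ k ω) := by
  choose hρ ρs hρs using fun k => isPredTime_iff_exists_announces.1 (h k)
  exact isPredTime_iff_exists_announces.2 ⟨IsStopTime.iSup hρ, _, Announces.iSup hρs⟩

end PredictableTimes

section Debut

variable {S T : Set (Ω × ℝ≥0)} {ω : Ω} {t : ℝ≥0}

theorem debut_le_of_mem (h : (ω, t) ∈ S) : debut S ω ≤ t :=
  iInf₂_le t h

theorem debut_anti (h : S ⊆ T) (ω : Ω) : debut T ω ≤ debut S ω :=
  le_iInf₂ fun _ ht => debut_le_of_mem (h ht)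

theorem debut_iUnion {ι : Sort*} (S : ι → Set (Ω × ℝ≥0)) (ω : Ω) :
    debut (⋃ i, S i) ω = ⨅ i, debut (S i) ω := by
  simp only [debut, mem_iUnion, iInf_exists]
  exact iInf_comm

theorem debut_eq_top_iff : debut S ω = ⊤ ↔ Prod.mk ω ⁻¹' S = ∅ := by
  simp [debut, eq_empty_iff_forall_notMem]

theorem debut_eq_coe_sInf (h : (Prod.mk ω ⁻¹' S).Nonempty) :
    debut S ω = ↑(sInf (Prod.mk ω ⁻¹' S)) :=
  (ENNReal.coe_sInf h).symm

def HasCompactSections (S : Set (Ω × ℝ≥0)) : Prop :=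
  ∀ ω, IsCompact (Prod.mk ω ⁻¹' S)

theorem HasCompactSections.iInter {D : ℕ → Set (Ω × ℝ≥0)} (hD : ∀ k, HasCompactSections (D k)) :
    HasCompactSections (⋂ k, D k) := fun ω => by
  rw [preimage_iInter]
  exact (hD 0 ω).of_isClosed_subset (isClosed_iInter fun k => (hD k ω).isClosed)
    (iInter_subset _ 0)

theorem HasCompactSections.exists_mem_of_debut_le (hS : HasCompactSections S) {s : ℝ≥0}
    (h : debut S ω ≤ s) : ∃ t ≤ s, (ω, t) ∈ S := by
  have hne : (Prod.mk ω ⁻¹' S).Nonempty := by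
    rw [nonempty_iff_ne_empty, Ne, ← debut_eq_top_iff]
    exact ne_top_of_le_ne_top ENNReal.coe_ne_top h
  rw [debut_eq_coe_sInf hne, ENNReal.coe_le_coe] at h
  exact ⟨_, h, (hS ω).sInf_mem hne⟩

theorem HasCompactSections.graph_debut_subset (hS : HasCompactSections S) :
    graph (debut S) ⊆ S := by
  rintro ⟨ω, t⟩ (h : debut S ω = t)
  obtain ⟨t', ht't, ht'⟩ := hS.exists_mem_of_debut_le h.le
  have htt' : t ≤ t' := ENNReal.coe_le_coe.1 (h ▸ debut_le_of_mem ht')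
  exact le_antisymm ht't htt' ▸ ht'

variable {D : ℕ → Set (Ω × ℝ≥0)}

theorem debut_iInter_of_antitone (hD : ∀ k, HasCompactSections (D k)) (hanti : Antitone D)
    (ω : Ω) : debut (⋂ k, D k) ω = ⨆ k, debut (D k) ω := by
  refine le_antisymm ?_ (iSup_le fun k => debut_anti (iInter_subset D k) ω)
  rcases eq_top_or_lt_top (⨆ k, debut (D k) ω) with h | h
  · exact h ▸ le_top
  lift ⨆ k, debut (D k) ω to ℝ≥0 using h.ne with s hs
  have hne : ∀ k, (Prod.mk ω ⁻¹' D k ∩ Iic s).Nonempty := fun k => by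
    obtain ⟨t, hts, ht⟩ := (hD k).exists_mem_of_debut_le (hs ▸ le_iSup (fun k => debut (D k) ω) k)
    exact ⟨t, ht, hts⟩
  obtain ⟨t, ht⟩ := IsCompact.nonempty_iInter_of_sequence_nonempty_isCompact_isClosed
    (fun k => Prod.mk ω ⁻¹' D k ∩ Iic s)
    (fun k => inter_subset_inter_left _ (preimage_mono (hanti k.le_succ))) hne
    ((hD 0 ω).inter_right isClosed_Iic) fun k => ((hD k ω).inter_right isClosed_Iic).isClosed
  rw [← iInter_inter, ← preimage_iInter] at ht
  exact (debut_le_of_mem ht.1).trans (ENNReal.coe_le_coe.2 ht.2)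

theorem projOmega_iInter_of_antitone (hD : ∀ k, HasCompactSections (D k)) (hanti : Antitone D) :
    projOmega (⋂ k, D k) = ⋂ k, projOmega (D k) := by
  refine Subset.antisymm (subset_iInter fun k => image_mono (iInter_subset D k)) fun ω hω => ?_
  have hne : ∀ k, (Prod.mk ω ⁻¹' D k).Nonempty := fun k => by
    obtain ⟨p, hp, rfl⟩ := mem_iInter.1 hω k
    exact ⟨p.2, hp⟩
  obtain ⟨t, ht⟩ := IsCompact.nonempty_iInter_of_sequence_nonempty_isCompact_isClosed
    (fun k => Prod.mk ω ⁻¹' D k) (fun k => preimage_mono (hanti k.le_succ)) hne (hD 0 ω)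
    fun k => (hD k ω).isClosed
  rw [← preimage_iInter] at ht
  exact ⟨(ω, t), ht, rfl⟩

end Debut

section EStar

variable {F : MeasurableSpace Ω} {𝔽 : Filtration ℝ≥0 F} {ρ τ : Ω → ℝ≥0∞} {D : Set (Ω × ℝ≥0)}

theorem hasCompactSections_stInterval (hτ : ∀ ω, τ ω < ⊤) :
    HasCompactSections (stInterval ρ τ) := fun ω =>
  (isCompact_Icc (a := 0) (b := (τ ω).toNNReal)).of_isClosed_subset
    (isClosed_Icc (a := ρ ω) (b := τ ω) |>.preimage ENNReal.continuous_coe)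
    fun _ ht => ⟨zero_le, ENNReal.le_toNNReal_of_coe_le ht.2 (hτ ω).ne⟩

theorem debut_stInterval (hτ : ∀ ω, τ ω < ⊤) : debut (stInterval ρ τ) = restrictLE ρ τ := by
  funext ω
  by_cases h : ρ ω ≤ τ ω
  · have hρ : ρ ω ≠ ⊤ := (h.trans_lt (hτ ω)).ne
    have hmem : (ω, (ρ ω).toNNReal) ∈ stInterval ρ τ := by
      simp [stInterval, ENNReal.coe_toNNReal hρ, h]
    rw [restrictLE_of_le h]
    exact le_antisymm ((debut_le_of_mem hmem).trans_eq (ENNReal.coe_toNNReal hρ))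
      (le_iInf₂ fun _ ht => ht.1)
  · rw [restrictLE_of_not_le h, debut_eq_top_iff]
    exact eq_empty_of_forall_notMem fun _ ht => h (ht.1.trans ht.2)

theorem hasCompactSections_of_mem_eStar (hD : D ∈ EStar 𝔽) : HasCompactSections D := by
  rcases hD with rfl | ⟨n, ρ, τ, -, -, hτ, rfl⟩
  · exact fun _ => isCompact_empty
  · intro ω
    rw [preimage_iUnion]
    exact isCompact_iUnion fun k => hasCompactSections_stInterval (hτ k) ω

theorem isPredTime_debut_of_mem_eStar (hD : D ∈ EStar 𝔽) : IsPredTime 𝔽 (debut D) := by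
  rcases hD with rfl | ⟨n, ρ, τ, hρ, hτ, hτ_lt, rfl⟩
  · have hempty : debut (∅ : Set (Ω × ℝ≥0)) = fun _ => ⊤ :=
      funext fun _ => debut_eq_top_iff.2 preimage_empty
    exact hempty ▸ isPredTime_top
  · have hunion :
        debut (⋃ k, stInterval (ρ k) (τ k)) = fun ω => ⨅ k, restrictLE (ρ k) (τ k) ω := by
      funext ω
      simp only [debut_iUnion, debut_stInterval (hτ_lt _)]
    exact hunion ▸ isPredTime_iInf fun k => isPredTime_restrictLE (hρ k) (hτ k)

end EStar

/-- for a decreasing sequence `(D_k)` of elements of `ℰ*`, the debuts are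
nondecreasing, `𝒟[⋂ₖ D_k] = supₖ 𝒟[D_k]` is a predictable time, its graph lies in
`⋂ₖ D_k`, and `π_Ω(⋂ₖ D_k) = ⋂ₖ π_Ω(D_k)`. -/
theorem debut_iInter_of_antitone_EStar {Ω : Type*} {F : MeasurableSpace Ω}
    (𝔽 : Filtration ℝ≥0 F) (D : ℕ → Set (Ω × ℝ≥0))
    (hD : ∀ k, D k ∈ EStar 𝔽) (hanti : Antitone D) :
    (∀ ω, Monotone fun k => debut (D k) ω) ∧
      debut (⋂ k, D k) = (fun ω => ⨆ k, debut (D k) ω) ∧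
      IsPredTime 𝔽 (debut (⋂ k, D k)) ∧
      graph (debut (⋂ k, D k)) ⊆ ⋂ k, D k ∧
      projOmega (⋂ k, D k) = ⋂ k, projOmega (D k) := by
  have hcompact : ∀ k, HasCompactSections (D k) := fun k => hasCompactSections_of_mem_eStar (hD k)
  have hdebut : debut (⋂ k, D k) = fun ω => ⨆ k, debut (D k) ω :=
    funext (debut_iInter_of_antitone hcompact hanti)
  refine ⟨fun ω _ _ hkl => debut_anti (hanti hkl) ω, hdebut, ?_,
    (HasCompactSections.iInter hcompact).graph_debut_subset,
    projOmega_iInter_of_antitone hcompact hanti⟩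
  exact hdebut ▸ isPredTime_iSup fun k => isPredTime_debut_of_mem_eStar (hD k)
end

section
/- (Measurable Projection Theorem) Let (Ω, F, ℙ) be a complete probability space. For every set S ∈ F ⊗ B(ℝ₊), the projection π_Ω(S) belongs to F. -/
open MeasureTheory Set
open scoped NNReal ENNReal

/-
A set of `F ⊗ 𝓑(ℝ≥0)` involves only countably many sets of `F`, so it is the preimage of a
Borel set `T ⊆ (ℕ → Bool) × ℝ≥0` under `(ω, t) ↦ (c ω, t)` for some measurable `c`, and its
projection is `c ⁻¹' (Prod.fst '' T)`. The set `Prod.fst '' T` is analytic, and an analytic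
set `range f`, `f : (ℕ → ℕ) → X` continuous, is null measurable for every finite measure: bounding
the coordinates one at a time while keeping the (outer) measure of the image large produces a
compact set `f '' ∏ [0, bᵢ]` of almost full measure. Pulling back along `c` and using
completeness of `P` finishes the proof.
-/

section CantorCode

variable {Ω Y : Type*} [MeasurableSpace Ω] [MeasurableSpace Y]

def IsCantorCoded (S : Set (Ω × Y)) : Prop :=
  ∃ (c : Ω → ℕ → Bool) (T : Set ((ℕ → Bool) × Y)), Measurable c ∧ MeasurableSet T ∧
    S = Prod.map c id ⁻¹' T

theorem isCantorCoded_prod {s : Set Ω} {t : Set Y} (hs : MeasurableSet s)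
    (ht : MeasurableSet t) : IsCantorCoded (s ×ˢ t) := by
  classical
  refine ⟨fun ω _ => decide (ω ∈ s), ((fun z : ℕ → Bool => z 0) ⁻¹' {true}) ×ˢ t,
    measurable_pi_lambda _ fun _ => measurable_to_bool (by simpa [preimage] using hs),
    ((measurableSet_singleton true).preimage (measurable_pi_apply 0)).prod ht, ?_⟩
  ext ⟨ω, y⟩
  simp

theorem IsCantorCoded.compl {S : Set (Ω × Y)} (hS : IsCantorCoded S) : IsCantorCoded Sᶜ := by
  obtain ⟨c, T, hc, hT, rfl⟩ := hS
  exact ⟨c, Tᶜ, hc, hT.compl, rfl⟩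

theorem isCantorCoded_iUnion {S : ℕ → Set (Ω × Y)} (hS : ∀ n, IsCantorCoded (S n)) :
    IsCantorCoded (⋃ n, S n) := by
  choose c T hc hT hST using hS
  -- the codes `c n` are interleaved into one code through the pairing `ℕ × ℕ ≃ ℕ`
  refine ⟨fun ω m => c m.unpair.1 ω m.unpair.2,
    ⋃ n, Prod.map (fun z j => z (Nat.pair n j)) id ⁻¹' T n,
    measurable_pi_lambda _ fun m => measurable_pi_apply _ |>.comp (hc _),
    MeasurableSet.iUnion fun n => (hT n).preimage <|
      (measurable_pi_lambda _ fun j => measurable_pi_apply _).prodMap measurable_id, ?_⟩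
  ext ⟨ω, y⟩
  simp [hST]

theorem MeasurableSet.isCantorCoded {S : Set (Ω × Y)} (hS : MeasurableSet S) :
    IsCantorCoded S := by
  rw [← generateFrom_prod] at hS
  induction S, hS using MeasurableSpace.generateFrom_induction with
  | hC S hS =>
    obtain ⟨s, hs, t, ht, rfl⟩ := hS
    exact isCantorCoded_prod hs ht
  | empty => exact ⟨fun _ _ => false, ∅, measurable_const, .empty, rfl⟩
  | compl S _ hS => exact hS.compl
  | iUnion S _ hS => exact isCantorCoded_iUnion hS

end CantorCode

theorem image_fst_preimage_prodMap_id {α β γ : Type*} (f : α → β) (T : Set (β × γ)) :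
    Prod.fst '' (Prod.map f id ⁻¹' T) = f ⁻¹' (Prod.fst '' T) := by
  ext
  simp

open Filter Topology

theorem iUnion_pi_Iio_succ_update (b : ℕ → ℕ) (k : ℕ) :
    ⋃ m, (Iio (k + 1)).pi (fun i => Iic (Function.update b k m i)) =
      (Iio k).pi fun i => Iic (b i) := by
  ext x
  simp only [mem_iUnion, Set.mem_pi, mem_Iio, mem_Iic]
  constructor
  · rintro ⟨m, hm⟩ i hi
    simpa [Function.update_of_ne hi.ne] using hm i (by omega)
  · intro hx
    refine ⟨x k, fun i hi => ?_⟩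
    rcases Nat.lt_succ_iff_lt_or_eq.1 hi with hi | rfl
    · simpa [Function.update_of_ne hi.ne] using hx i hi
    · simp

theorem exists_forall_lt_measure_image_pi_Iio {X : Type*} [MeasurableSpace X]
    (μ : Measure X) (f : (ℕ → ℕ) → X) {c : ℝ≥0∞} (hc : c < μ (range f)) :
    ∃ b : ℕ → ℕ, ∀ k, c < μ (f '' (Iio k).pi fun i => Iic (b i)) := by
  have step : ∀ k (b : ℕ → ℕ), c < μ (f '' (Iio k).pi fun i => Iic (b i)) →
      ∃ m, c < μ (f '' (Iio (k + 1)).pi fun i => Iic (Function.update b k m i)) := by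
    intro k b hb
    have hmono : Monotone fun m => f '' (Iio (k + 1)).pi fun i => Iic (Function.update b k m i) :=
      fun m m' hm => image_mono <| pi_mono fun i _ => Iic_subset_Iic.2 <| by
        rcases eq_or_ne i k with rfl | hi
        · simpa using hm
        · simp [Function.update_of_ne hi]
    -- continuity from below holds for arbitrary, not only measurable, sets
    rwa [← iUnion_pi_Iio_succ_update b k, image_iUnion, hmono.directed_le.measure_iUnion,
      lt_iSup_iff] at hb
  choose! next hnext using step
  let g : ℕ → ℕ → ℕ := fun k =>
    Nat.rec (motive := fun _ => ℕ → ℕ) 0 (fun k bk => Function.update bk k (next k bk)) k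
  have hg : ∀ k, c < μ (f '' (Iio k).pi fun i => Iic (g k i)) := by
    intro k
    induction k with
    | zero => simpa using hc
    | succ k ih => exact hnext k (g k) ih
  have hg_stable : ∀ k, ∀ i < k, g k i = g (i + 1) i := by
    intro k
    induction k with
    | zero => intro i hi; omega
    | succ k ih =>
      intro i hi
      rcases Nat.lt_succ_iff_lt_or_eq.1 hi with hi | rfl
      · rw [← ih i hi]
        exact Function.update_of_ne hi.ne _ _
      · rfl
  refine ⟨fun i => g (i + 1) i, fun k => ?_⟩
  rw [pi_congr (s₁ := Iio k) rfl fun i hi => congrArg Iic (hg_stable k i hi).symm]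
  exact hg k

theorem exists_tendsto_subseq_of_mem_pi_Iio {b : ℕ → ℕ} {x : ℕ → ℕ → ℕ}
    (hx : ∀ k, x k ∈ (Iio k).pi fun i => Iic (b i)) :
    ∃ a ∈ univ.pi fun i => Iic (b i), ∃ φ : ℕ → ℕ, StrictMono φ ∧
      Tendsto (x ∘ φ) atTop (𝓝 a) := by
  -- `x k i ≤ b i` as soon as `i < k`, so each coordinate takes finitely many values
  set M : ℕ → ℕ := fun i => max (b i) ((Finset.range (i + 1)).sup fun k => x k i)
  have hxM : ∀ k, x k ∈ univ.pi fun i => Iic (M i) := by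
    intro k i _
    rcases lt_or_ge i k with h | h
    · exact le_max_of_le_left (mem_Iic.1 (hx k i h))
    · exact le_max_of_le_right (Finset.le_sup (f := fun k => x k i) (by simpa [Nat.lt_succ_iff]))
  obtain ⟨a, -, φ, hφ, hlim⟩ :=
    (isCompact_univ_pi fun i => (finite_Iic (M i)).isCompact).tendsto_subseq hxM
  refine ⟨a, ?_, φ, hφ, hlim⟩
  rw [← iUnion_Iio, pi_iUnion_eq_iInter_pi, mem_iInter]
  intro k
  refine (isClosed_set_pi fun i _ => isClosed_discrete _).mem_of_tendsto hlim ?_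
  filter_upwards [eventually_ge_atTop k] with j hj
  exact pi_mono' (fun _ _ => subset_rfl) (Iio_subset_Iio (hj.trans hφ.le_apply)) (hx (φ j))

theorem iInter_closure_image_pi_Iio_subset {X : Type*} [TopologicalSpace X] [T2Space X]
    [FirstCountableTopology X] {f : (ℕ → ℕ) → X} (hf : Continuous f) (b : ℕ → ℕ) :
    ⋂ k, closure (f '' (Iio k).pi fun i => Iic (b i)) ⊆ f '' univ.pi fun i => Iic (b i) := by
  intro y hy
  obtain ⟨U, hU⟩ := (𝓝 y).exists_antitone_basis
  have hx : ∀ k, ∃ x ∈ (Iio k).pi fun i => Iic (b i), f x ∈ U k := by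
    intro k
    obtain ⟨_, hyU, x, hx, rfl⟩ := mem_closure_iff_nhds.1 (mem_iInter.1 hy k) _ (hU.mem k)
    exact ⟨x, hx, hyU⟩
  choose x hxb hxU using hx
  obtain ⟨a, ha, φ, hφ, hlim⟩ := exists_tendsto_subseq_of_mem_pi_Iio hxb
  refine ⟨a, ha, tendsto_nhds_unique ((hf.tendsto a).comp hlim) ?_⟩
  exact (hU.tendsto hxU).comp hφ.tendsto_atTop

theorem exists_isCompact_subset_range_le_measure {X : Type*} [TopologicalSpace X] [T2Space X]
    [FirstCountableTopology X] [MeasurableSpace X] [OpensMeasurableSpace X] (μ : Measure X)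
    [IsFiniteMeasure μ] {f : (ℕ → ℕ) → X} (hf : Continuous f) {c : ℝ≥0∞}
    (hc : c < μ (range f)) : ∃ K ⊆ range f, IsCompact K ∧ c ≤ μ K := by
  obtain ⟨b, hb⟩ := exists_forall_lt_measure_image_pi_Iio μ f hc
  refine ⟨_, image_subset_range _ _,
    (isCompact_univ_pi fun i => (finite_Iic (b i)).isCompact).image hf, ?_⟩
  have hanti : Antitone fun k => closure (f '' (Iio k).pi fun i => Iic (b i)) :=
    fun k l hkl => closure_mono <| image_mono <|
      pi_mono' (fun _ _ => subset_rfl) (Iio_subset_Iio hkl)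
  calc c ≤ ⨅ k, μ (closure (f '' (Iio k).pi fun i => Iic (b i))) :=
        le_iInf fun k => (hb k).le.trans (measure_mono subset_closure)
    _ = μ (⋂ k, closure (f '' (Iio k).pi fun i => Iic (b i))) :=
        (hanti.measure_iInter (fun _ => isClosed_closure.nullMeasurableSet)
          ⟨0, measure_ne_top μ _⟩).symm
    _ ≤ _ := measure_mono (iInter_closure_image_pi_Iio_subset hf b)

theorem nullMeasurableSet_of_forall_lt_measure {X : Type*} [MeasurableSpace X] {μ : Measure X}
    {A : Set X} (hA : μ A ≠ ∞) (h : ∀ c < μ A, ∃ C ⊆ A, MeasurableSet C ∧ c ≤ μ C) :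
    NullMeasurableSet A μ := by
  rcases eq_zero_or_pos (μ A) with h0 | hpos
  · exact NullMeasurableSet.of_null h0
  obtain ⟨u, -, hu, hlim⟩ := exists_seq_strictMono_tendsto' hpos
  choose C hCA hC hCu using fun n => h (u n) (hu n).2
  have hle : μ A ≤ μ (⋃ n, C n) :=
    le_of_tendsto' hlim fun n => (hCu n).trans (measure_mono (subset_iUnion C n))
  exact (MeasurableSet.iUnion hC).nullMeasurableSet.congr
    (ae_eq_of_subset_of_measure_ge (iUnion_subset hCA) hle
      (MeasurableSet.iUnion hC).nullMeasurableSet hA)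

theorem MeasureTheory.AnalyticSet.nullMeasurableSet {X : Type*} [TopologicalSpace X] [T2Space X]
    [FirstCountableTopology X] [MeasurableSpace X] [OpensMeasurableSpace X] (μ : Measure X)
    [IsFiniteMeasure μ] {A : Set X} (hA : AnalyticSet A) : NullMeasurableSet A μ := by
  rw [AnalyticSet_def] at hA
  rcases hA with rfl | ⟨f, hf, rfl⟩
  · exact nullMeasurableSet_empty
  refine nullMeasurableSet_of_forall_lt_measure (measure_ne_top μ _) fun c hc => ?_
  obtain ⟨K, hKf, hK, hcK⟩ := exists_isCompact_subset_range_le_measure μ hf hc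
  exact ⟨K, hKf, hK.isClosed.measurableSet, hcK⟩

/-- Measurable Projection Theorem: over a complete probability space,
the projection onto `Ω` of any `S ∈ F ⊗ B(ℝ₊)` belongs to `F`. -/
theorem measurable_projection {Ω : Type*} {F : MeasurableSpace Ω}
    (P : Measure Ω) [IsProbabilityMeasure P] (hc : P.IsComplete)
    (S : Set (Ω × ℝ≥0)) (hS : MeasurableSet S) :
    MeasurableSet (Prod.fst '' S) := by
  obtain ⟨code, T, hcode, hT, rfl⟩ := hS.isCantorCoded
  rw [image_fst_preimage_prodMap_id]
  have hA : AnalyticSet (Prod.fst '' T) := hT.analyticSet_image measurable_fst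
  exact ((hA.nullMeasurableSet (P.map code)).preimage
    (hcode.quasiMeasurePreserving P)).measurable_of_complete
end
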